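/- Let H = (V, ℰ) be a hypergraph (hyperedges are nonempty, possibly of size one) and let v ∈ V be a vertex that has a twin u ≠ v. Then: (i) the map F ↦ F ∖ {v} is injective on ℰ; and (ii) for all vertices x, y ∈ V ∖ {v}, the vertices x and y are twins in the hypergraph (V ∖ {v}, {F ∖ {v} : F ∈ ℰ}) if and only if they are twins in H. -/

import Mathlib

/-- A hypergraph: a finite vertex set `V ⊆ ℕ` together with a finite family of
hyperedges, each a nonempty subset of `V` (size-one hyperedges allowed). -/
structure FinHypergraph where
  V : Finset ℕ
  E : Finset (Finset ℕ)
  edge_sub : ∀ F ∈ E, F ⊆ V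
  edge_nonempty : ∀ F ∈ E, F.Nonempty

/-- `x` and `y` are twins with respect to the hyperedge family `E`:
they are contained in precisely the same hyperedges. -/
def AreTwins (E : Finset (Finset ℕ)) (x y : ℕ) : Prop :=
  E.filter (fun F => x ∈ F) = E.filter (fun F => y ∈ F)

theorem areTwins_iff {E : Finset (Finset ℕ)} {x y : ℕ} :
    AreTwins E x y ↔ ∀ F ∈ E, (x ∈ F ↔ y ∈ F) :=
  Finset.filter_inj'

/-- Whether `v ∈ F` can still be read off from `u`, which erasing `v` keeps. -/
theorem Finset.injOn_erase_of_mem_iff {α : Type*} [DecidableEq α] {S : Set (Finset α)} {u v : α}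
    (huv : u ≠ v) (hS : ∀ F ∈ S, (u ∈ F ↔ v ∈ F)) :
    Set.InjOn (fun F => F.erase v) S := by
  intro F hF G hG hFG
  ext a
  by_cases hav : a = v
  · subst hav
    have hu : u ∈ F ↔ u ∈ G := by
      simpa only [Finset.mem_erase, huv, ne_eq, not_false_eq_true, true_and]
        using Finset.ext_iff.mp hFG u
    rw [← hS F hF, ← hS G hG, hu]
  · simpa only [Finset.mem_erase, hav, ne_eq, not_false_eq_true, true_and]
      using Finset.ext_iff.mp hFG a

theorem areTwins_image_erase_iff (E : Finset (Finset ℕ)) {v x y : ℕ} (hx : x ≠ v) (hy : y ≠ v) :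
    AreTwins (E.image (fun F => F.erase v)) x y ↔ AreTwins E x y := by
  simp only [areTwins_iff, Finset.forall_mem_image, Finset.mem_erase, hx, hy, ne_eq,
    not_false_eq_true, true_and]

theorem delete_twin_preserves_edges_and_twins_general
    (H : FinHypergraph) (u v : ℕ) (huv : u ≠ v)
    (htwin : AreTwins H.E u v) :
    Set.InjOn (fun F => F.erase v) (H.E : Set (Finset ℕ)) ∧
    ∀ x ∈ H.V.erase v, ∀ y ∈ H.V.erase v,
      (AreTwins (H.E.image (fun F => F.erase v)) x y ↔ AreTwins H.E x y) :=
  ⟨Finset.injOn_erase_of_mem_iff huv (areTwins_iff.mp htwin),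
    fun _ hx _ hy => areTwins_image_erase_iff H.E (Finset.ne_of_mem_erase hx)
      (Finset.ne_of_mem_erase hy)⟩

/-- If `v` has a twin `u ≠ v` in `H`, then (i) `F ↦ F ∖ {v}` is
injective on the hyperedge family of `H`, and (ii) for vertices
`x, y ∈ V ∖ {v}`, being twins in `(V ∖ {v}, {F ∖ {v} : F ∈ ℰ})` is equivalent
to being twins in `H`. -/
theorem delete_twin_preserves_edges_and_twins
    (H : FinHypergraph) (u v : ℕ) (hu : u ∈ H.V) (hv : v ∈ H.V) (huv : u ≠ v)
    (htwin : AreTwins H.E u v) :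
    Set.InjOn (fun F => F.erase v) (H.E : Set (Finset ℕ)) ∧
    ∀ x ∈ H.V.erase v, ∀ y ∈ H.V.erase v,
      (AreTwins (H.E.image (fun F => F.erase v)) x y ↔ AreTwins H.E x y) :=
  delete_twin_preserves_edges_and_twins_general H u v huv htwin
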